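/- arXiv:2208.11281 — 5 statements merged into one kernel-verified Lean document; each statement's English description precedes it below -/
import Mathlib

section
/- Let z₁ > 0, z₂ > 0, and c > 0 be real numbers, and define h : (−z₁, z₂) → ℝ by h(ω) = (z₁ + ω)·log((z₁ + ω)/z₁) + (z₂ − ω)·log((z₂ − ω)/c). Then ω* = z₁(z₂ − c)/(z₁ + c) lies in the open interval (−z₁, z₂), h is strictly convex on (−z₁, z₂), and h attains its unique global minimum over (−z₁, z₂) at ω*. -/
/-!
Each summand of `h` is `x ↦ x log (x / a)`, a strictly convex function, composed with an injective
affine map, so `h` is strictly convex. At `ω*` both ratios `(z₁ + ω) / z₁` and `(z₂ - ω) / c` equal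
`t = (z₁ + z₂) / (z₁ + c)`, so `h ω* = (z₁ + z₂) log t`; at any other `ω` the two ratios differ, and
the strict log-sum inequality gives `h ω > (z₁ + z₂) log t`.
-/

open Real Set

theorem StrictConvexOn.comp_affineMap {𝕜 E F β : Type*} [Field 𝕜] [LinearOrder 𝕜]
    [AddCommGroup E] [AddCommGroup F] [AddCommMonoid β] [PartialOrder β]
    [Module 𝕜 E] [Module 𝕜 F] [SMul 𝕜 β] {f : F → β} {s : Set F}
    (hf : StrictConvexOn 𝕜 s f) (g : E →ᵃ[𝕜] F) (hg : Function.Injective g) :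
    StrictConvexOn 𝕜 (g ⁻¹' s) (f ∘ g) :=
  ⟨hf.1.affine_preimage _, fun x hx y hy hxy a b ha hb hab =>
    calc
      (f ∘ g) (a • x + b • y) = f (a • g x + b • g y) := by
        rw [Function.comp_apply, Convex.combo_affine_apply hab]
      _ < a • f (g x) + b • f (g y) := hf.2 hx hy (hg.ne hxy) ha hb hab⟩

theorem Real.strictConvexOn_mul_log_div {a : ℝ} (ha : a ≠ 0) :
    StrictConvexOn ℝ (Ioi 0) fun x => x * log (x / a) := by
  have hlin : ConcaveOn ℝ (Ioi 0) fun x : ℝ => x * log a :=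
    (LinearMap.mul ℝ ℝ |>.flip (log a)).concaveOn (convex_Ioi 0)
  refine ((strictConvexOn_mul_log.subset (Ioi_subset_Ici le_rfl) (convex_Ioi 0)).sub_concaveOn
    hlin).congr fun x hx => ?_
  rw [Pi.sub_apply, log_div (ne_of_gt hx) ha]
  ring

theorem Real.strictConvexOn_mul_log_div_add_mul_log_div {a b p q : ℝ} (ha : a ≠ 0) (hb : b ≠ 0) :
    StrictConvexOn ℝ (Ioo (-p) q)
      fun x => (p + x) * log ((p + x) / a) + (q - x) * log ((q - x) / b) := by
  have hleft := (strictConvexOn_mul_log_div ha).comp_affineMap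
    (AffineMap.const ℝ ℝ p + AffineMap.id ℝ ℝ) fun x y hxy => by simpa using hxy
  have hright := (strictConvexOn_mul_log_div hb).comp_affineMap
    (AffineMap.const ℝ ℝ q - AffineMap.id ℝ ℝ) fun x y hxy => by simpa using hxy
  refine ((hleft.subset ?_ (convex_Ioo _ _)).add (hright.subset ?_ (convex_Ioo _ _))).congr
    fun x _ => by simp
  · exact fun x hx => show 0 < p + x by linarith [hx.1]
  · exact fun x hx => show 0 < q - x by linarith [hx.2]

-- The strict log-sum inequality: Jensen for `x log x` at `u / a`, `v / b` with weights `a`, `b`.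
theorem Real.add_mul_log_div_add_lt {u v a b : ℝ} (hu : 0 < u) (hv : 0 < v) (ha : 0 < a)
    (hb : 0 < b) (huv : u / a ≠ v / b) :
    (u + v) * log ((u + v) / (a + b)) < u * log (u / a) + v * log (v / b) := by
  have hab : 0 < a + b := add_pos ha hb
  have := strictConvexOn_mul_log.2 (le_of_lt (div_pos hu ha)) (le_of_lt (div_pos hv hb)) huv
    (div_pos ha hab) (div_pos hb hab) (by field_simp)
  simp only [smul_eq_mul] at this
  have hmean : a / (a + b) * (u / a) + b / (a + b) * (v / b) = (u + v) / (a + b) := by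
    field_simp
  rw [hmean] at this
  have hsum : a / (a + b) * (u / a * log (u / a)) + b / (a + b) * (v / b * log (v / b))
      = (u * log (u / a) + v * log (v / b)) / (a + b) := by
    field_simp
  rwa [hsum, div_mul_eq_mul_div, div_lt_div_iff_of_pos_right hab] at this

/-- For z₁, z₂, c > 0 and h(ω) = (z₁+ω)log((z₁+ω)/z₁) + (z₂−ω)log((z₂−ω)/c) on (−z₁, z₂):
ω* = z₁(z₂−c)/(z₁+c) is interior, h is strictly convex, and ω* is the unique global minimizer. -/
theorem stmt6 (z₁ z₂ c : ℝ) (hz₁ : 0 < z₁) (hz₂ : 0 < z₂) (hc : 0 < c) :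
    let h : ℝ → ℝ := fun ω =>
      (z₁ + ω) * Real.log ((z₁ + ω) / z₁) + (z₂ - ω) * Real.log ((z₂ - ω) / c)
    let ωstar : ℝ := z₁ * (z₂ - c) / (z₁ + c)
    ωstar ∈ Set.Ioo (-z₁) z₂ ∧
      StrictConvexOn ℝ (Set.Ioo (-z₁) z₂) h ∧
      ∀ ω ∈ Set.Ioo (-z₁) z₂, ω ≠ ωstar → h ωstar < h ω := by
  intro h ωstar
  set t := (z₁ + z₂) / (z₁ + c)
  have ht : 0 < t := by positivity
  have hleft : (z₁ + ωstar) / z₁ = t := by simp only [ωstar, t]; field_simp; ring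
  have hright : (z₂ - ωstar) / c = t := by simp only [ωstar, t]; field_simp; ring
  have hmin : h ωstar = (z₁ + z₂) * log t := by simp only [h, hleft, hright]; ring
  refine ⟨⟨?_, ?_⟩, strictConvexOn_mul_log_div_add_mul_log_div hz₁.ne' hc.ne', ?_⟩
  · linarith [(div_pos_iff_of_pos_right hz₁).mp (hleft ▸ ht)]
  · linarith [(div_pos_iff_of_pos_right hc).mp (hright ▸ ht)]
  rintro ω ⟨hω₁, hω₂⟩ hne
  have hratio : (z₁ + ω) / z₁ ≠ (z₂ - ω) / c := by
    rw [ne_eq, div_eq_div_iff hz₁.ne' hc.ne']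
    refine fun heq => hne ?_
    rw [eq_div_iff (by positivity)]
    linarith
  have hsum : z₁ + ω + (z₂ - ω) = z₁ + z₂ := by ring
  calc h ωstar = (z₁ + z₂) * log t := hmin
    _ < h ω := by
      simpa only [hsum] using add_mul_log_div_add_lt (by linarith) (by linarith) hz₁ hc hratio
end

section
/- Let z₁ > 0, z₂ > 0, and c > 0 be real numbers, let h(ω) = (z₁ + ω)·log((z₁ + ω)/z₁) + (z₂ − ω)·log((z₂ − ω)/c), and let ω* = z₁(z₂ − c)/(z₁ + c). For any L ≤ U with [L,U] ⊆ (−z₁, z₂), the minimizer of h over the closed interval [L,U] is unique and equals min(max(ω*, L), U), i.e., the clamp of ω* to [L,U]. -/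
/-!
On `(-z₁, z₂)` the derivative of `h` is `log ((z₁ + ω) / z₁) - log ((z₂ - ω) / c)`, which is
negative exactly when `c (z₁ + ω) < z₁ (z₂ - ω)`, i.e. when `ω < ω*`. So `h` strictly decreases up
to `ω*` and strictly increases after it, and on `[L, U]` the unique minimizer is the point of
`[L, U]` closest to `ω*`.
-/

open Set Real

lemma Real.hasDerivAt_mul_log_div {k y : ℝ} (hk : k ≠ 0) (hy : y ≠ 0) :
    HasDerivAt (fun x => x * log (x / k)) (log (y / k) + 1) y := by
  have hquot : HasDerivAt (fun x => x / k) (1 / k) y := (hasDerivAt_id y).div_const k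
  have hfun : (fun x => x * log (x / k)) = fun x => k * (x / k * log (x / k)) := by
    funext x
    field_simp
  rw [hfun]
  exact (((hasDerivAt_mul_log (div_ne_zero hy hk)).comp y hquot).const_mul k).congr_deriv
    (by rw [mul_one_div, mul_div_cancel₀ _ hk])

lemma strictMonoOn_inter_Ici_of_hasDerivAt_pos {f f' : ℝ → ℝ} {D : Set ℝ} {a : ℝ}
    (hD : Convex ℝ D) (hf : ∀ x ∈ D, HasDerivAt f (f' x) x) (hpos : ∀ x ∈ D, a < x → 0 < f' x) :
    StrictMonoOn f (D ∩ Ici a) := by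
  refine strictMonoOn_of_deriv_pos (hD.inter (convex_Ici a))
    (fun x hx => (hf x hx.1).continuousAt.continuousWithinAt) fun x hx => ?_
  rw [interior_inter, interior_Ici] at hx
  have hxD := interior_subset hx.1
  rw [(hf x hxD).deriv]
  exact hpos x hxD hx.2

lemma strictAntiOn_inter_Iic_of_hasDerivAt_neg {f f' : ℝ → ℝ} {D : Set ℝ} {a : ℝ}
    (hD : Convex ℝ D) (hf : ∀ x ∈ D, HasDerivAt f (f' x) x) (hneg : ∀ x ∈ D, x < a → f' x < 0) :
    StrictAntiOn f (D ∩ Iic a) := by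
  refine strictAntiOn_of_deriv_neg (hD.inter (convex_Iic a))
    (fun x hx => (hf x hx.1).continuousAt.continuousWithinAt) fun x hx => ?_
  rw [interior_inter, interior_Iic] at hx
  have hxD := interior_subset hx.1
  rw [(hf x hxD).deriv]
  exact hneg x hxD hx.2

lemma clamp_mem_Icc {a L U : ℝ} (hLU : L ≤ U) : min (max a L) U ∈ Icc L U :=
  ⟨le_min (le_max_right a L) hLU, min_le_right _ _⟩

lemma apply_clamp_lt_of_strictAntiOn_of_strictMonoOn {f : ℝ → ℝ} {s : Set ℝ} {a L U : ℝ}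
    (hLU : L ≤ U) (hs : Icc L U ⊆ s) (hanti : StrictAntiOn f (s ∩ Iic a))
    (hmono : StrictMonoOn f (s ∩ Ici a)) :
    ∀ ω ∈ Icc L U, ω ≠ min (max a L) U → f (min (max a L) U) < f ω := by
  set m := min (max a L) U
  have hm : m ∈ Icc L U := clamp_mem_Icc hLU
  intro ω hω hne
  rcases hne.lt_or_gt with hlt | hgt
  · have hma : m ≤ a := by
      by_contra! ham
      exact (max_lt ham (hω.1.trans_lt hlt)).not_ge (min_le_left _ _)
    exact hanti ⟨hs hω, hlt.le.trans hma⟩ ⟨hs hm, hma⟩ hlt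
  · have ham : a ≤ m := by
      by_contra! hma
      have : min a U ≤ m := min_le_min_right U (le_max_left a L)
      exact (lt_min hma (hgt.trans_le hω.2)).not_ge this
    exact hmono ⟨hs hm, ham⟩ ⟨hs hω, ham.trans hgt.le⟩ hgt

lemma sub_div_lt_add_div_iff {z₁ z₂ c x : ℝ} (hz₁ : 0 < z₁) (hc : 0 < c) :
    (z₂ - x) / c < (z₁ + x) / z₁ ↔ z₁ * (z₂ - c) / (z₁ + c) < x := by
  rw [div_lt_div_iff₀ hc hz₁, div_lt_iff₀ (by positivity)]
  constructor <;> intro <;> linarith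

lemma add_div_lt_sub_div_iff {z₁ z₂ c x : ℝ} (hz₁ : 0 < z₁) (hc : 0 < c) :
    (z₁ + x) / z₁ < (z₂ - x) / c ↔ x < z₁ * (z₂ - c) / (z₁ + c) := by
  rw [div_lt_div_iff₀ hz₁ hc, lt_div_iff₀ (by positivity)]
  constructor <;> intro <;> linarith

theorem stmt7_general (z₁ z₂ c L U : ℝ) (hz₁ : 0 < z₁) (hc : 0 < c)
    (hLU : L ≤ U) (hsub : Set.Icc L U ⊆ Set.Ioo (-z₁) z₂) :
    let h : ℝ → ℝ := fun ω =>
      (z₁ + ω) * Real.log ((z₁ + ω) / z₁) + (z₂ - ω) * Real.log ((z₂ - ω) / c)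
    let m : ℝ := min (max (z₁ * (z₂ - c) / (z₁ + c)) L) U
    m ∈ Set.Icc L U ∧ ∀ ω ∈ Set.Icc L U, ω ≠ m → h m < h ω := by
  intro h m
  have hpos : ∀ x ∈ Ioo (-z₁) z₂, 0 < z₁ + x ∧ 0 < z₂ - x := fun x hx =>
    ⟨by linarith [hx.1], by linarith [hx.2]⟩
  have hderiv : ∀ x ∈ Ioo (-z₁) z₂,
      HasDerivAt h (log ((z₁ + x) / z₁) - log ((z₂ - x) / c)) x := by
    intro x hx
    have h₁ := (hasDerivAt_mul_log_div hz₁.ne' (hpos x hx).1.ne').comp x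
      ((hasDerivAt_id x).const_add z₁)
    have h₂ := (hasDerivAt_mul_log_div hc.ne' (hpos x hx).2.ne').comp x
      ((hasDerivAt_id x).const_sub z₂)
    exact (h₁.add h₂).congr_deriv (by ring)
  have hanti := strictAntiOn_inter_Iic_of_hasDerivAt_neg (convex_Ioo _ _) hderiv
    fun x hx hlt => sub_neg.2 <| log_lt_log (div_pos (hpos x hx).1 hz₁)
      ((add_div_lt_sub_div_iff hz₁ hc).2 hlt)
  have hmono := strictMonoOn_inter_Ici_of_hasDerivAt_pos (convex_Ioo _ _) hderiv
    fun x hx hlt => sub_pos.2 <| log_lt_log (div_pos (hpos x hx).2 hc)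
      ((sub_div_lt_add_div_iff hz₁ hc).2 hlt)
  exact ⟨clamp_mem_Icc hLU, apply_clamp_lt_of_strictAntiOn_of_strictMonoOn hLU hsub hanti hmono⟩

/-- The minimizer of h(ω) = (z₁+ω)log((z₁+ω)/z₁) + (z₂−ω)log((z₂−ω)/c) over a closed
interval [L,U] ⊆ (−z₁, z₂) is unique and equals the clamp of ω* = z₁(z₂−c)/(z₁+c) to [L,U]. -/
theorem stmt7 (z₁ z₂ c L U : ℝ) (hz₁ : 0 < z₁) (hz₂ : 0 < z₂) (hc : 0 < c)
    (hLU : L ≤ U) (hsub : Set.Icc L U ⊆ Set.Ioo (-z₁) z₂) :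
    let h : ℝ → ℝ := fun ω =>
      (z₁ + ω) * Real.log ((z₁ + ω) / z₁) + (z₂ - ω) * Real.log ((z₂ - ω) / c)
    let m : ℝ := min (max (z₁ * (z₂ - c) / (z₁ + c)) L) U
    m ∈ Set.Icc L U ∧ ∀ ω ∈ Set.Icc L U, ω ≠ m → h m < h ω :=
  stmt7_general z₁ z₂ c L U hz₁ hc hLU hsub
end

section
/- Two-player binary game: given parameters d₁,d₂,β₁,β₂ ∈ ℝ and shocks u₁,u₂ ∈ ℝ, each player j ∈ {1,2} chooses y⁽ʲ⁾ ∈ {0,1} and receives payoff y⁽ʲ⁾·(d_j + β_j·y⁽⁻ʲ⁾ + u_j), where y⁽⁻ʲ⁾ is the other player's action. Suppose β₁ < 0, β₂ < 0, and −d_j < u_j < −d_j − β_j for j = 1,2. Then the set of pure strategy Nash equilibria is exactly {(1,0), (0,1)}. -/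
/-!
Since actions are 0 or 1, a profile is an equilibrium iff each player's marginal payoff
`d_j + β_j y⁽⁻ʲ⁾ + u_j` is `≥ 0` when it plays 1 and `≤ 0` when it plays 0. For `u_j` in the
band `(-d_j, -d_j - β_j)` this marginal payoff is positive against 0 and negative against 1,
so each player's unique best response is the opposite of the other's action.
-/

/-- A profile y = (y₁,y₂) ∈ {0,1}² is a pure strategy Nash equilibrium of the two-player
binary game in which player j receives payoff y⁽ʲ⁾·(d_j + β_j·y⁽⁻ʲ⁾ + u_j). -/
def IsPSNE (d₁ d₂ β₁ β₂ u₁ u₂ : ℝ) (y : ℝ × ℝ) : Prop :=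
  y.1 ∈ ({0, 1} : Set ℝ) ∧ y.2 ∈ ({0, 1} : Set ℝ) ∧
    (∀ z ∈ ({0, 1} : Set ℝ), z * (d₁ + β₁ * y.2 + u₁) ≤ y.1 * (d₁ + β₁ * y.2 + u₁)) ∧
    (∀ z ∈ ({0, 1} : Set ℝ), z * (d₂ + β₂ * y.1 + u₂) ≤ y.2 * (d₂ + β₂ * y.1 + u₂))

section BestResponse

variable {R : Type*} [MulZeroOneClass R] [Preorder R]

theorem forall_mem_zero_one_mul_le_one_mul_iff {a : R} :
    (∀ z ∈ ({0, 1} : Set R), z * a ≤ 1 * a) ↔ 0 ≤ a := by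
  simp

theorem forall_mem_zero_one_mul_le_zero_mul_iff {a : R} :
    (∀ z ∈ ({0, 1} : Set R), z * a ≤ 0 * a) ↔ a ≤ 0 := by
  simp

end BestResponse

theorem isPSNE_iff {d₁ d₂ β₁ β₂ u₁ u₂ : ℝ} {y : ℝ × ℝ} :
    IsPSNE d₁ d₂ β₁ β₂ u₁ u₂ y ↔
      (y = (0, 0) ∧ d₁ + u₁ ≤ 0 ∧ d₂ + u₂ ≤ 0) ∨
      (y = (1, 0) ∧ 0 ≤ d₁ + u₁ ∧ d₂ + β₂ + u₂ ≤ 0) ∨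
      (y = (0, 1) ∧ d₁ + β₁ + u₁ ≤ 0 ∧ 0 ≤ d₂ + u₂) ∨
      (y = (1, 1) ∧ 0 ≤ d₁ + β₁ + u₁ ∧ 0 ≤ d₂ + β₂ + u₂) := by
  obtain ⟨a, b⟩ := y
  constructor
  · rintro ⟨rfl | rfl, rfl | rfl, H₁, H₂⟩ <;>
      simp only [forall_mem_zero_one_mul_le_one_mul_iff,
        forall_mem_zero_one_mul_le_zero_mul_iff, mul_zero, mul_one, add_zero] at H₁ H₂ <;>
      simp [H₁, H₂]
  · rintro (⟨h, H₁, H₂⟩ | ⟨h, H₁, H₂⟩ | ⟨h, H₁, H₂⟩ | ⟨h, H₁, H₂⟩) <;>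
      simp only [Prod.mk.injEq] at h <;> obtain ⟨rfl, rfl⟩ := h <;>
      refine ⟨by simp, by simp, ?_, ?_⟩ <;>
      simpa only [forall_mem_zero_one_mul_le_one_mul_iff,
        forall_mem_zero_one_mul_le_zero_mul_iff, mul_zero, mul_one, add_zero]

theorem stmt11_general (d₁ d₂ β₁ β₂ u₁ u₂ : ℝ)
    (h₁ : -d₁ < u₁ ∧ u₁ < -d₁ - β₁) (h₂ : -d₂ < u₂ ∧ u₂ < -d₂ - β₂) :
    {y : ℝ × ℝ | IsPSNE d₁ d₂ β₁ β₂ u₁ u₂ y} = {((1 : ℝ), (0 : ℝ)), ((0 : ℝ), (1 : ℝ))} := by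
  obtain ⟨h₁l, h₁r⟩ := h₁
  obtain ⟨h₂l, h₂r⟩ := h₂
  ext y
  rw [Set.mem_ofPred_eq, isPSNE_iff, Set.mem_insert_iff, Set.mem_singleton_iff]
  constructor
  · rintro (⟨-, h, -⟩ | ⟨rfl, -⟩ | ⟨rfl, -⟩ | ⟨-, h, -⟩)
    · linarith
    · exact .inl rfl
    · exact .inr rfl
    · linarith
  · rintro (rfl | rfl)
    · exact .inr <| .inl ⟨rfl, by linarith, by linarith⟩
    · exact .inr <| .inr <| .inl ⟨rfl, by linarith, by linarith⟩

/-- Under strategic substitution (β₁, β₂ < 0), if −d_j < u_j < −d_j − β_j for j = 1,2,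
the set of pure strategy Nash equilibria is exactly {(1,0), (0,1)}. -/
theorem stmt11 (d₁ d₂ β₁ β₂ u₁ u₂ : ℝ) (hβ₁ : β₁ < 0) (hβ₂ : β₂ < 0)
    (h₁ : -d₁ < u₁ ∧ u₁ < -d₁ - β₁) (h₂ : -d₂ < u₂ ∧ u₂ < -d₂ - β₂) :
    {y : ℝ × ℝ | IsPSNE d₁ d₂ β₁ β₂ u₁ u₂ y} = {((1 : ℝ), (0 : ℝ)), ((0 : ℝ), (1 : ℝ))} :=
  stmt11_general d₁ d₂ β₁ β₂ u₁ u₂ h₁ h₂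
end

section
/- Two-player binary game: given parameters d₁,d₂,β₁,β₂ ∈ ℝ and shocks u₁,u₂ ∈ ℝ, each player j ∈ {1,2} chooses y⁽ʲ⁾ ∈ {0,1} and receives payoff y⁽ʲ⁾·(d_j + β_j·y⁽⁻ʲ⁾ + u_j), where y⁽⁻ʲ⁾ is the other player's action. Suppose β₁ < 0 and β₂ < 0, and suppose u₁ ∉ {−d₁, −d₁ − β₁} and u₂ ∉ {−d₂, −d₂ − β₂}. Then the set of pure strategy Nash equilibria equals {(1,0)} if and only if (u₁,u₂) belongs to the set S = {u : u₁ > −d₁ − β₁ and u₂ < −d₂ − β₂} ∪ {u : −d₁ < u₁ < −d₁ − β₁ and u₂ < −d₂}. -/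
section
variable (d₁ d₂ β₁ β₂ u₁ u₂ : ℝ)

theorem isPSNE_zero_zero_iff :
    IsPSNE d₁ d₂ β₁ β₂ u₁ u₂ (0, 0) ↔ d₁ + u₁ ≤ 0 ∧ d₂ + u₂ ≤ 0 := by
  simp [IsPSNE]

theorem isPSNE_one_zero_iff :
    IsPSNE d₁ d₂ β₁ β₂ u₁ u₂ (1, 0) ↔ 0 ≤ d₁ + u₁ ∧ d₂ + β₂ + u₂ ≤ 0 := by
  simp [IsPSNE]

theorem isPSNE_zero_one_iff :
    IsPSNE d₁ d₂ β₁ β₂ u₁ u₂ (0, 1) ↔ d₁ + β₁ + u₁ ≤ 0 ∧ 0 ≤ d₂ + u₂ := by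
  simp [IsPSNE]

theorem isPSNE_one_one_iff :
    IsPSNE d₁ d₂ β₁ β₂ u₁ u₂ (1, 1) ↔ 0 ≤ d₁ + β₁ + u₁ ∧ 0 ≤ d₂ + β₂ + u₂ := by
  simp [IsPSNE]

theorem setOf_isPSNE_eq_singleton_one_zero_iff :
    {y | IsPSNE d₁ d₂ β₁ β₂ u₁ u₂ y} = {(1, 0)} ↔
      IsPSNE d₁ d₂ β₁ β₂ u₁ u₂ (1, 0) ∧ ¬IsPSNE d₁ d₂ β₁ β₂ u₁ u₂ (0, 0) ∧
        ¬IsPSNE d₁ d₂ β₁ β₂ u₁ u₂ (0, 1) ∧ ¬IsPSNE d₁ d₂ β₁ β₂ u₁ u₂ (1, 1) := by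
  rw [Set.eq_singleton_iff_unique_mem]
  constructor
  · rintro ⟨h10, huniq⟩
    refine ⟨h10, fun h => ?_, fun h => ?_, fun h => ?_⟩ <;> simpa using huniq _ h
  · rintro ⟨h10, h00, h01, h11⟩
    refine ⟨h10, fun ⟨y₁, y₂⟩ hy => ?_⟩
    obtain ⟨rfl | rfl, rfl | rfl, -⟩ := id hy <;> first | rfl | contradiction

end

theorem stmt12_general (d₁ d₂ β₁ β₂ u₁ u₂ : ℝ) (hβ₁ : β₁ < 0) (hβ₂ : β₂ < 0)
    (h₁ : u₁ ∉ ({-d₁, -d₁ - β₁} : Set ℝ)) :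
    {y : ℝ × ℝ | IsPSNE d₁ d₂ β₁ β₂ u₁ u₂ y} = {((1 : ℝ), (0 : ℝ))} ↔
      (u₁, u₂) ∈ ({u : ℝ × ℝ | -d₁ - β₁ < u.1 ∧ u.2 < -d₂ - β₂} ∪
        {u : ℝ × ℝ | -d₁ < u.1 ∧ u.1 < -d₁ - β₁ ∧ u.2 < -d₂}) := by
  simp only [Set.mem_insert_iff, Set.mem_singleton_iff, not_or] at h₁
  rw [setOf_isPSNE_eq_singleton_one_zero_iff, isPSNE_zero_zero_iff, isPSNE_one_zero_iff,
    isPSNE_zero_one_iff, isPSNE_one_one_iff]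
  simp only [Set.mem_union, Set.mem_ofPred_eq]
  grind

/-- Under strategic substitution and away from the threshold boundaries, the set of pure
strategy Nash equilibria equals {(1,0)} iff (u₁,u₂) lies in the region
S = {u₁ > −d₁ − β₁, u₂ < −d₂ − β₂} ∪ {−d₁ < u₁ < −d₁ − β₁, u₂ < −d₂}. -/
theorem stmt12 (d₁ d₂ β₁ β₂ u₁ u₂ : ℝ) (hβ₁ : β₁ < 0) (hβ₂ : β₂ < 0)
    (h₁ : u₁ ∉ ({-d₁, -d₁ - β₁} : Set ℝ)) (h₂ : u₂ ∉ ({-d₂, -d₂ - β₂} : Set ℝ)) :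
    {y : ℝ × ℝ | IsPSNE d₁ d₂ β₁ β₂ u₁ u₂ y} = {((1 : ℝ), (0 : ℝ))} ↔
      (u₁, u₂) ∈ ({u : ℝ × ℝ | -d₁ - β₁ < u.1 ∧ u.2 < -d₂ - β₂} ∪
        {u : ℝ × ℝ | -d₁ < u.1 ∧ u.1 < -d₁ - β₁ ∧ u.2 < -d₂}) :=
  stmt12_general d₁ d₂ β₁ β₂ u₁ u₂ hβ₁ hβ₂ h₁
end

section
/- Let U₁ and U₂ be independent random variables each having the standard normal distribution N(0,1), let Φ denote the cumulative distribution function of N(0,1), and let d₁, d₂ ∈ ℝ and β₁, β₂ ≤ 0. Then the probability of the event ({U₁ > −d₁ − β₁ and U₂ < −d₂ − β₂} ∪ {−d₁ < U₁ < −d₁ − β₁ and U₂ < −d₂}) equals Φ(d₁)·(1 − Φ(d₂)) + Φ(d₁ + β₁)·(Φ(d₂) − Φ(d₂ + β₂)). -/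
/-!
The event is the disjoint union of two product sets `U₁ ∈ A, U₂ ∈ B` (the `U₁`-intervals
`(-d₁-β₁, ∞)` and `(-d₁, -d₁-β₁)` are disjoint), so by independence its probability is a sum of
two products of standard normal interval probabilities. These are differences of values of `Φ`,
and the symmetry `Φ (-x) = 1 - Φ x` turns the sum into the stated expression.
-/

open MeasureTheory ProbabilityTheory

/-- The cumulative distribution function of the standard normal distribution. -/
noncomputable def Phi (x : ℝ) : ℝ := ((gaussianReal 0 1) (Set.Iic x)).toReal

open Set

section RealLine

variable {μ : Measure ℝ}

lemma measureReal_Iio_eq_measureReal_Iic [NullSingletonClass μ] (x : ℝ) :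
    μ.real (Iio x) = μ.real (Iic x) :=
  measureReal_congr Iio_ae_eq_Iic

lemma probReal_Ioi [IsProbabilityMeasure μ] (x : ℝ) : μ.real (Ioi x) = 1 - μ.real (Iic x) := by
  rw [← compl_Iic, probReal_compl_eq_one_sub measurableSet_Iic]

lemma measureReal_Ioo_eq_sub [NullSingletonClass μ] [IsFiniteMeasure μ] {a b : ℝ} (hab : a ≤ b) :
    μ.real (Ioo a b) = μ.real (Iic b) - μ.real (Iic a) := by
  rw [measureReal_congr Ioo_ae_eq_Ioc, show Ioc a b = Iic b \ Iic a by ext; simp [and_comm],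
    measureReal_sdiff (Iic_subset_Iic.2 hab) measurableSet_Iic]

end RealLine

instance {m : ℝ} {v : NNReal} [NeZero v] : NullSingletonClass (gaussianReal m v) :=
  ⟨fun x => gaussianReal_absolutelyContinuous m (NeZero.ne v) (measure_singleton x)⟩

lemma Phi_eq_measureReal (x : ℝ) : Phi x = (gaussianReal 0 1).real (Iic x) := rfl

lemma Phi_neg (x : ℝ) : Phi (-x) = 1 - Phi x := by
  have hsymm : (gaussianReal 0 1).map (fun y : ℝ => -y) = gaussianReal 0 1 := by
    simpa using gaussianReal_map_neg (μ := 0) (v := 1)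
  rw [Phi_eq_measureReal, ← hsymm, map_measureReal_apply measurable_neg measurableSet_Iic,
    show (fun y : ℝ => -y) ⁻¹' Iic (-x) = Ici x by ext; simp, ← measureReal_congr Ioi_ae_eq_Ici,
    probReal_Ioi, Phi_eq_measureReal]

lemma ProbabilityTheory.IndepFun.measureReal_preimage_inter_preimage {Ω α β : Type*}
    [MeasurableSpace Ω] [MeasurableSpace α] [MeasurableSpace β] {P : Measure Ω}
    {X : Ω → α} {Y : Ω → β} {μ : Measure α} {ν : Measure β} (hXY : IndepFun X Y P) (hX : HasLaw X μ P)
    (hY : HasLaw Y ν P) {s : Set α} {t : Set β} (hs : MeasurableSet s) (ht : MeasurableSet t) :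
    P.real (X ⁻¹' s ∩ Y ⁻¹' t) = μ.real s * ν.real t := by
  rw [measureReal_def, hXY.measure_inter_preimage_eq_mul _ _ hs ht, ENNReal.toReal_mul,
    ← measureReal_def, ← measureReal_def, ← hX.map_eq, ← hY.map_eq,
    map_measureReal_apply_of_aemeasurable hX.aemeasurable hs,
    map_measureReal_apply_of_aemeasurable hY.aemeasurable ht]

lemma ProbabilityTheory.HasLaw.of_map_eq {Ω α : Type*} [MeasurableSpace Ω] [MeasurableSpace α]
    {P : Measure Ω} {X : Ω → α} {μ : Measure α} [NeZero μ] (h : P.map X = μ) : HasLaw X μ P :=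
  ⟨AEMeasurable.of_map_ne_zero (h ▸ NeZero.ne μ), h⟩

theorem stmt13_general {Ω : Type*} [MeasurableSpace Ω] (P : Measure Ω) [IsProbabilityMeasure P]
    (U₁ U₂ : Ω → ℝ)
    (hind : IndepFun U₁ U₂ P)
    (hU₁ : P.map U₁ = gaussianReal 0 1) (hU₂ : P.map U₂ = gaussianReal 0 1)
    (d₁ d₂ β₁ β₂ : ℝ) (hβ₁ : β₁ ≤ 0) :
    (P ({ω | -d₁ - β₁ < U₁ ω ∧ U₂ ω < -d₂ - β₂} ∪
        {ω | -d₁ < U₁ ω ∧ U₁ ω < -d₁ - β₁ ∧ U₂ ω < -d₂})).toReal =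
      Phi d₁ * (1 - Phi d₂) + Phi (d₁ + β₁) * (Phi d₂ - Phi (d₂ + β₂)) := by
  have h₁ := HasLaw.of_map_eq hU₁
  have h₂ := HasLaw.of_map_eq hU₂
  have hA : {ω | -d₁ - β₁ < U₁ ω ∧ U₂ ω < -d₂ - β₂} =
      U₁ ⁻¹' Ioi (-d₁ - β₁) ∩ U₂ ⁻¹' Iio (-d₂ - β₂) := rfl
  have hB : {ω | -d₁ < U₁ ω ∧ U₁ ω < -d₁ - β₁ ∧ U₂ ω < -d₂} =
      U₁ ⁻¹' Ioo (-d₁) (-d₁ - β₁) ∩ U₂ ⁻¹' Iio (-d₂) := by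
    ext; simp [and_assoc]
  have hdisj : Disjoint (Ioi (-d₁ - β₁)) (Ioo (-d₁) (-d₁ - β₁)) :=
    disjoint_left.2 fun _ hlo hhi => hhi.2.not_gt hlo
  have hB_meas : NullMeasurableSet (U₁ ⁻¹' Ioo (-d₁) (-d₁ - β₁) ∩ U₂ ⁻¹' Iio (-d₂)) P :=
    (h₁.aemeasurable.nullMeasurableSet_preimage measurableSet_Ioo).inter
      (h₂.aemeasurable.nullMeasurableSet_preimage measurableSet_Iio)
  rw [← measureReal_def, hA, hB, measureReal_union₀ hB_meas
      ((hdisj.preimage U₁).mono inter_subset_left inter_subset_left).aedisjoint,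
    hind.measureReal_preimage_inter_preimage h₁ h₂ measurableSet_Ioi measurableSet_Iio,
    hind.measureReal_preimage_inter_preimage h₁ h₂ measurableSet_Ioo measurableSet_Iio,
    probReal_Ioi, measureReal_Iio_eq_measureReal_Iic, measureReal_Iio_eq_measureReal_Iic,
    measureReal_Ioo_eq_sub (by linarith)]
  simp only [← Phi_eq_measureReal, ← neg_add', Phi_neg]
  ring

/-- For U₁, U₂ independent standard normals and β₁, β₂ ≤ 0, the probability of
{U₁ > −d₁−β₁, U₂ < −d₂−β₂} ∪ {−d₁ < U₁ < −d₁−β₁, U₂ < −d₂} equals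
Φ(d₁)(1 − Φ(d₂)) + Φ(d₁+β₁)(Φ(d₂) − Φ(d₂+β₂)). -/
theorem stmt13 {Ω : Type*} [MeasurableSpace Ω] (P : Measure Ω) [IsProbabilityMeasure P]
    (U₁ U₂ : Ω → ℝ) (hm₁ : Measurable U₁) (hm₂ : Measurable U₂)
    (hind : IndepFun U₁ U₂ P)
    (hU₁ : P.map U₁ = gaussianReal 0 1) (hU₂ : P.map U₂ = gaussianReal 0 1)
    (d₁ d₂ β₁ β₂ : ℝ) (hβ₁ : β₁ ≤ 0) (hβ₂ : β₂ ≤ 0) :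
    (P ({ω | -d₁ - β₁ < U₁ ω ∧ U₂ ω < -d₂ - β₂} ∪
        {ω | -d₁ < U₁ ω ∧ U₁ ω < -d₁ - β₁ ∧ U₂ ω < -d₂})).toReal =
      Phi d₁ * (1 - Phi d₂) + Phi (d₁ + β₁) * (Phi d₂ - Phi (d₂ + β₂)) :=
  stmt13_general P U₁ U₂ hind hU₁ hU₂ d₁ d₂ β₁ β₂ hβ₁
end
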